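/- For the basis functions χ_i(x) = L_i(x) − L_{i+1}(x), the weighted mass integrals c_{ij} = ∫_{−1}^{1} χ_j(x) χ_i(x) (x+1) dx satisfy c_{ii} = 4(i+1)/((2i+1)(2i+3)), c_{i,i+1} = 4/((2i+1)(2i+3)(2i+5)), c_{i,i+2} = −2(i+2)/((2i+3)(2i+5)), and c_{ij} = 0 for |i − j| ≥ 3. -/

import Mathlib

/-!
Rodrigues' formula gives the Legendre equation `((X² - 1) Lₙ')' = n(n+1) Lₙ` and
`L'ₙ₊₁ = X Lₙ' + (n+1) Lₙ`; evaluated at `1` they give `Lₙ(1) = 1`, and from there Bonnet's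
recurrence `(2n+1) X Lₙ = (n+1) Lₙ₊₁ + n Lₙ₋₁`. Integrating by parts, the Legendre operator is
symmetric on `[-1, 1]`, so the `Lₙ` are orthogonal there, and pairing the recurrence with `Lₙ₋₁`
and `Lₙ₊₁` gives `(2n+1) ∫ Lₙ² = 2`. By the recurrence,
`(2i+1)(2i+3)(x+1) χᵢ = i(2i+3)(Lᵢ₋₁ - Lᵢ₊₁) + (i+2)(2i+1)(Lᵢ - Lᵢ₊₂)`, so `c_{ij}` is read off
from the orthogonality relations.
-/

open Polynomial intervalIntegral

/-- The `n`-th Legendre polynomial via Rodrigues' formula. -/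
noncomputable def legendre (n : ℕ) : Polynomial ℝ :=
  Polynomial.C ((2 ^ n * n.factorial : ℝ)⁻¹) * Polynomial.derivative^[n] ((X ^ 2 - 1) ^ n)

/-- χ_i = L_i − L_{i+1}. -/
noncomputable def chi (i : ℕ) : Polynomial ℝ := legendre i - legendre (i + 1)

/-- c_{ij} = ∫_{-1}^1 χ_j χ_i (x+1) dx. -/
noncomputable def cMat (i j : ℕ) : ℝ :=
  ∫ x in (-1 : ℝ)..1, (chi j).eval x * (chi i).eval x * (x + 1)

lemma derivative_pow_succ_X_sq_sub_one (n : ℕ) :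
    derivative ((X ^ 2 - 1 : ℝ[X]) ^ (n + 1)) = (2 * (n + 1)) • ((X ^ 2 - 1) ^ n * X) := by
  rw [derivative_pow_succ, derivative_sub, derivative_X_sq, derivative_one, nsmul_eq_mul]
  simp only [map_add, map_natCast, map_one, map_ofNat]
  push_cast
  ring

lemma X_sq_sub_one_mul_derivative_X_sq_sub_one_pow (n : ℕ) :
    (X ^ 2 - 1) * derivative ((X ^ 2 - 1 : ℝ[X]) ^ n) = (2 * n) • ((X ^ 2 - 1) ^ n * X) := by
  cases n with
  | zero => simp
  | succ n =>
    rw [derivative_pow_succ_X_sq_sub_one, mul_smul_comm]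
    ring_nf

-- Differentiate `(X² - 1) g' = 2n X g`, where `g = (X² - 1)ⁿ`, `n + 1` times by Leibniz' rule.
lemma derivative_X_sq_sub_one_mul_derivative_rodrigues (n : ℕ) :
    derivative ((X ^ 2 - 1) * derivative (derivative^[n] ((X ^ 2 - 1 : ℝ[X]) ^ n))) =
      (n * (n + 1) : ℝ[X]) * derivative^[n] ((X ^ 2 - 1 : ℝ[X]) ^ n) := by
  set g : ℝ[X] := (X ^ 2 - 1) ^ n
  have h := congrArg (derivative^[n + 1]) (X_sq_sub_one_mul_derivative_X_sq_sub_one_pow n)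
  rw [show (X ^ 2 - 1) * derivative g = derivative g * X * X - derivative g by ring,
    iterate_derivative_sub, iterate_derivative_smul, iterate_derivative_mul_X (_ * X),
    Nat.add_sub_cancel, iterate_derivative_derivative_mul_X, iterate_derivative_derivative_mul_X,
    iterate_derivative_mul_X g, Nat.add_sub_cancel] at h
  simp only [nsmul_eq_mul, ← Function.iterate_succ_apply] at h
  simp only [Function.iterate_succ_apply'] at h
  simp only [derivative_mul, derivative_sub, derivative_X_sq, derivative_one, map_ofNat]
  push_cast at h ⊢
  linear_combination h

lemma derivative_X_sq_sub_one_mul_derivative_legendre (n : ℕ) :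
    derivative ((X ^ 2 - 1) * derivative (legendre n)) = (n * (n + 1) : ℝ[X]) * legendre n := by
  have h := derivative_X_sq_sub_one_mul_derivative_rodrigues n
  simp only [legendre, derivative_C_mul, mul_left_comm _ (C _)]
  linear_combination C ((2 ^ n * n.factorial : ℝ)⁻¹) * h

lemma derivative_iterate_derivative_rodrigues_succ (n : ℕ) :
    derivative (derivative^[n + 1] ((X ^ 2 - 1 : ℝ[X]) ^ (n + 1))) =
      (2 * (n + 1)) • (derivative^[n + 1] ((X ^ 2 - 1) ^ n) * X
        + (n + 1) • derivative^[n] ((X ^ 2 - 1) ^ n)) := by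
  rw [← Function.iterate_succ_apply' derivative, Function.iterate_succ_apply,
    derivative_pow_succ_X_sq_sub_one, iterate_derivative_smul, iterate_derivative_mul_X,
    Nat.add_sub_cancel]

lemma derivative_legendre_succ (n : ℕ) :
    derivative (legendre (n + 1)) =
      X * derivative (legendre n) + (n + 1 : ℝ[X]) * legendre n := by
  have hc : ((2 : ℝ) ^ (n + 1) * (n + 1).factorial)⁻¹ * (2 * (n + 1)) =
      ((2 : ℝ) ^ n * n.factorial)⁻¹ := by
    rw [Nat.factorial_succ]
    push_cast
    field_simp
    ring
  rw [legendre, legendre, derivative_C_mul, derivative_C_mul,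
    derivative_iterate_derivative_rodrigues_succ, Function.iterate_succ_apply', nsmul_eq_mul,
    nsmul_eq_mul, ← hc, C_mul]
  simp only [map_mul, map_add, map_natCast, map_ofNat, map_one]
  push_cast
  ring

lemma legendre_zero : legendre 0 = 1 := by
  simp [legendre]

lemma two_mul_eval_one_derivative_legendre (n : ℕ) :
    2 * (derivative (legendre n)).eval 1 = n * (n + 1) * (legendre n).eval 1 := by
  have h := congrArg (eval 1) (derivative_X_sq_sub_one_mul_derivative_legendre n)
  simp only [derivative_mul, derivative_sub, derivative_X_sq, derivative_one, eval_add, eval_mul,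
    eval_sub, eval_pow, eval_X, eval_one, eval_zero, eval_C, eval_natCast] at h
  linear_combination h

lemma legendre_eval_one (n : ℕ) : (legendre n).eval 1 = 1 := by
  induction n with
  | zero => simp [legendre_zero]
  | succ n ih =>
    have h := congrArg (eval 1) (derivative_legendre_succ n)
    simp only [eval_add, eval_mul, eval_X, eval_natCast, eval_one, ih] at h
    have h₀ := two_mul_eval_one_derivative_legendre n
    have h₁ := two_mul_eval_one_derivative_legendre (n + 1)
    rw [ih] at h₀
    push_cast at h₁
    have hne : ((n : ℝ) + 1) * (n + 2) ≠ 0 := by positivity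
    refine mul_left_cancel₀ hne ?_
    linear_combination -h₁ + 2 * h + h₀

-- Both sides have the same derivative and agree at `1`.
lemma succ_mul_legendre_succ (n : ℕ) :
    (n + 1 : ℝ[X]) * legendre (n + 1) =
      (n + 1 : ℝ[X]) * (X * legendre n) + (X ^ 2 - 1) * derivative (legendre n) := by
  set E := (n + 1 : ℝ[X]) * legendre (n + 1) - (n + 1 : ℝ[X]) * (X * legendre n) -
    (X ^ 2 - 1) * derivative (legendre n) with hE
  have hE' : derivative E = 0 := by
    rw [hE, derivative_sub, derivative_sub, derivative_X_sq_sub_one_mul_derivative_legendre]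
    simp only [derivative_mul, derivative_add, derivative_natCast, derivative_one, derivative_X,
      derivative_legendre_succ]
    ring
  have hE1 : E.eval 1 = 0 := by
    simp [hE, legendre_eval_one]
  have hE0 : E = 0 := by
    rw [eq_C_of_derivative_eq_zero hE'] at hE1 ⊢
    simpa using hE1
  linear_combination hE0

lemma X_sq_sub_one_mul_derivative_legendre_succ (n : ℕ) :
    (X ^ 2 - 1) * derivative (legendre (n + 1)) =
      (n + 1 : ℝ[X]) * (X * legendre (n + 1) - legendre n) := by
  linear_combination
    (X ^ 2 - 1 : ℝ[X]) * derivative_legendre_succ n - X * succ_mul_legendre_succ n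

theorem legendre_recurrence (n : ℕ) :
    (2 * n + 1 : ℝ[X]) * (X * legendre n) =
      (n + 1 : ℝ[X]) * legendre (n + 1) + (n : ℝ[X]) * legendre (n - 1) := by
  cases n with
  | zero =>
    have h := succ_mul_legendre_succ 0
    simp only [legendre_zero, derivative_one] at h ⊢
    linear_combination -h
  | succ m =>
    have h := succ_mul_legendre_succ (m + 1)
    rw [X_sq_sub_one_mul_derivative_legendre_succ] at h
    push_cast at h ⊢
    linear_combination -h

noncomputable def polyIntegral (a b : ℝ) : ℝ[X] →ₗ[ℝ] ℝ where
  toFun p := ∫ x in a..b, p.eval x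
  map_add' p q := by
    simp only [eval_add]
    exact integral_add (p.continuous.intervalIntegrable a b) (q.continuous.intervalIntegrable a b)
  map_smul' r p := by
    simp only [eval_smul, smul_eq_mul, integral_const_mul, RingHom.id_apply]

lemma polyIntegral_apply (a b : ℝ) (p : ℝ[X]) :
    polyIntegral a b p = ∫ x in a..b, p.eval x := rfl

lemma polyIntegral_C_mul (a b r : ℝ) (p : ℝ[X]) :
    polyIntegral a b (C r * p) = r * polyIntegral a b p := by
  rw [C_mul', map_smul, smul_eq_mul]

lemma polyIntegral_derivative (a b : ℝ) (p : ℝ[X]) :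
    polyIntegral a b (derivative p) = p.eval b - p.eval a :=
  integral_eq_sub_of_hasDerivAt (fun x _ => p.hasDerivAt x)
    ((derivative p).continuous.intervalIntegrable a b)

lemma polyIntegral_derivative_mul (a b : ℝ) (p q : ℝ[X]) :
    polyIntegral a b (derivative p * q) =
      p.eval b * q.eval b - p.eval a * q.eval a - polyIntegral a b (p * derivative q) := by
  have h := polyIntegral_derivative a b (p * q)
  rw [derivative_mul, map_add, eval_mul, eval_mul] at h
  linear_combination h

lemma polyIntegral_derivative_X_sq_sub_one_mul_derivative_mul (p q : ℝ[X]) :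
    polyIntegral (-1) 1 (derivative ((X ^ 2 - 1) * derivative p) * q) =
      -polyIntegral (-1) 1 ((X ^ 2 - 1) * derivative p * derivative q) := by
  rw [polyIntegral_derivative_mul]
  simp

theorem polyIntegral_legendre_mul_legendre_of_ne {m n : ℕ} (h : m ≠ n) :
    polyIntegral (-1) 1 (legendre m * legendre n) = 0 := by
  have key (k l : ℕ) : (k * (k + 1) : ℝ) * polyIntegral (-1) 1 (legendre k * legendre l) =
      -polyIntegral (-1) 1 ((X ^ 2 - 1) * derivative (legendre k) * derivative (legendre l)) := by
    rw [← polyIntegral_derivative_X_sq_sub_one_mul_derivative_mul,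
      derivative_X_sq_sub_one_mul_derivative_legendre, ← polyIntegral_C_mul, ← mul_assoc]
    simp
  have hsym : (m * (m + 1) : ℝ) * polyIntegral (-1) 1 (legendre m * legendre n) =
      n * (n + 1) * polyIntegral (-1) 1 (legendre m * legendre n) := by
    rw [key, mul_comm (legendre m), key, mul_right_comm]
  have hne : (m * (m + 1) : ℝ) - n * (n + 1) ≠ 0 := by
    rcases lt_or_gt_of_ne h with hlt | hlt
    · have : (m : ℝ) < n := by exact_mod_cast hlt
      nlinarith
    · have : (n : ℝ) < m := by exact_mod_cast hlt
      nlinarith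
  have hzero :
      ((m * (m + 1) : ℝ) - n * (n + 1)) * polyIntegral (-1) 1 (legendre m * legendre n) = 0 := by
    linear_combination hsym
  exact (mul_eq_zero.mp hzero).resolve_left hne

lemma polyIntegral_X_mul_legendre_mul (n : ℕ) (q : ℝ[X]) :
    (2 * n + 1) * polyIntegral (-1) 1 (X * legendre n * q) =
      (n + 1) * polyIntegral (-1) 1 (legendre (n + 1) * q) +
        n * polyIntegral (-1) 1 (legendre (n - 1) * q) := by
  have hC : C (2 * n + 1 : ℝ) * (X * legendre n) =
      C (n + 1 : ℝ) * legendre (n + 1) + C (n : ℝ) * legendre (n - 1) := by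
    simp only [map_add, map_mul, map_natCast, map_one, map_ofNat]
    exact legendre_recurrence n
  have h := congrArg (fun p => polyIntegral (-1) 1 (p * q)) hC
  simpa only [add_mul, mul_assoc, map_add, polyIntegral_C_mul] using h

theorem polyIntegral_legendre_mul_self (n : ℕ) :
    polyIntegral (-1) 1 (legendre n * legendre n) = 2 / (2 * n + 1) := by
  rw [eq_div_iff (by positivity)]
  induction n with
  | zero => simp [legendre_zero, polyIntegral_apply]; norm_num
  | succ m ih =>
    have h₁ := polyIntegral_X_mul_legendre_mul (m + 1) (legendre m)
    have h₂ := polyIntegral_X_mul_legendre_mul m (legendre (m + 1))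
    rw [polyIntegral_legendre_mul_legendre_of_ne (by omega), Nat.add_sub_cancel] at h₁
    rw [polyIntegral_legendre_mul_legendre_of_ne (m := m - 1) (by omega)] at h₂
    rw [mul_right_comm X] at h₂
    push_cast at h₁ h₂ ⊢
    have hm : (m : ℝ) + 1 ≠ 0 := by positivity
    refine mul_left_cancel₀ hm ?_
    linear_combination (2 * (m : ℝ) + 1) * h₁ - (2 * (m : ℝ) + 3) * h₂ + (m + 1) * ih

theorem polyIntegral_legendre_mul_legendre (m n : ℕ) :
    polyIntegral (-1) 1 (legendre m * legendre n) =
      if m = n then (2 / (2 * n + 1) : ℝ) else 0 := by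
  split_ifs with h
  · rw [h, polyIntegral_legendre_mul_self]
  · exact polyIntegral_legendre_mul_legendre_of_ne h

lemma polyIntegral_legendre_mul_chi (k j : ℕ) :
    polyIntegral (-1) 1 (legendre k * chi j) =
      (if k = j then (2 / (2 * j + 1) : ℝ) else 0) -
        if k = j + 1 then (2 / (2 * j + 3) : ℝ) else 0 := by
  rw [chi, mul_sub, map_sub, polyIntegral_legendre_mul_legendre, polyIntegral_legendre_mul_legendre]
  push_cast
  ring_nf

lemma cMat_eq_polyIntegral (i j : ℕ) :
    cMat i j = polyIntegral (-1) 1 (chi j * chi i * (X + 1)) := by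
  simp [cMat, polyIntegral_apply]

lemma mul_cMat (i j : ℕ) :
    (2 * i + 1) * (2 * i + 3) * cMat i j =
      i * (2 * i + 3) * (polyIntegral (-1) 1 (legendre (i - 1) * chi j) -
          polyIntegral (-1) 1 (legendre (i + 1) * chi j)) +
        (i + 2) * (2 * i + 1) * (polyIntegral (-1) 1 (legendre i * chi j) -
          polyIntegral (-1) 1 (legendre (i + 2) * chi j)) := by
  have hsplit : chi j * chi i * (X + 1) =
      X * legendre i * chi j - X * legendre (i + 1) * chi j + legendre i * chi j -
        legendre (i + 1) * chi j := by
    rw [show chi i = legendre i - legendre (i + 1) from rfl]; ring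
  have h₀ := polyIntegral_X_mul_legendre_mul i (chi j)
  have h₁ := polyIntegral_X_mul_legendre_mul (i + 1) (chi j)
  rw [Nat.add_sub_cancel] at h₁
  rw [cMat_eq_polyIntegral, hsplit]
  simp only [map_add, map_sub]
  push_cast at h₁
  linear_combination (2 * (i : ℝ) + 3) * h₀ - (2 * (i : ℝ) + 1) * h₁

theorem cMat_self (i : ℕ) :
    cMat i i = 4 * ((i : ℝ) + 1) / ((2 * (i : ℝ) + 1) * (2 * (i : ℝ) + 3)) := by
  refine mul_left_cancel₀ (by positivity : (2 * (i : ℝ) + 1) * (2 * i + 3) ≠ 0) ?_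
  rw [mul_cMat]
  cases i with
  | zero => norm_num [polyIntegral_legendre_mul_chi]
  | succ m =>
    simp (disch := omega) only [polyIntegral_legendre_mul_chi, if_neg, ↓reduceIte]
    push_cast
    field_simp
    ring

theorem cMat_self_add_one (i : ℕ) :
    cMat i (i + 1) = 4 / ((2 * (i : ℝ) + 1) * (2 * (i : ℝ) + 3) * (2 * (i : ℝ) + 5)) := by
  refine mul_left_cancel₀ (by positivity : (2 * (i : ℝ) + 1) * (2 * i + 3) ≠ 0) ?_
  rw [mul_cMat]
  simp (disch := omega) only [polyIntegral_legendre_mul_chi, if_neg, ↓reduceIte]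
  push_cast
  field_simp
  ring

theorem cMat_self_add_two (i : ℕ) :
    cMat i (i + 2) = -(2 * ((i : ℝ) + 2)) / ((2 * (i : ℝ) + 3) * (2 * (i : ℝ) + 5)) := by
  refine mul_left_cancel₀ (by positivity : (2 * (i : ℝ) + 1) * (2 * i + 3) ≠ 0) ?_
  rw [mul_cMat]
  simp (disch := omega) only [polyIntegral_legendre_mul_chi, if_neg, ↓reduceIte]
  push_cast
  field_simp
  ring

theorem cMat_eq_zero_of_add_three_le {i j : ℕ} (hij : i + 3 ≤ j) : cMat i j = 0 := by
  have h := mul_cMat i j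
  simp (disch := omega) only [polyIntegral_legendre_mul_chi, if_neg, sub_zero, mul_zero,
    add_zero] at h
  have hne : (2 * (i : ℝ) + 1) * (2 * i + 3) ≠ 0 := by positivity
  exact (mul_eq_zero.mp h).resolve_left hne

lemma cMat_comm (i j : ℕ) : cMat i j = cMat j i := by
  rw [cMat_eq_polyIntegral, cMat_eq_polyIntegral, mul_comm (chi i)]

theorem weighted_mass_entries (i j : ℕ) :
    cMat i i = 4 * ((i : ℝ) + 1) / ((2 * (i : ℝ) + 1) * (2 * (i : ℝ) + 3)) ∧
    cMat i (i + 1) = 4 / ((2 * (i : ℝ) + 1) * (2 * (i : ℝ) + 3) * (2 * (i : ℝ) + 5)) ∧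
    cMat i (i + 2) = -(2 * ((i : ℝ) + 2)) / ((2 * (i : ℝ) + 3) * (2 * (i : ℝ) + 5)) ∧
    (3 ≤ |(i : ℤ) - (j : ℤ)| → cMat i j = 0) := by
  refine ⟨cMat_self i, cMat_self_add_one i, cMat_self_add_two i, fun h => ?_⟩
  rcases le_abs.mp h with h | h
  · rw [cMat_comm]
    exact cMat_eq_zero_of_add_three_le (by omega)
  · exact cMat_eq_zero_of_add_three_le (by omega)
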